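/- arXiv:2108.00189 — 2 statements merged into one kernel-verified Lean document; each statement's English description precedes it below -/
import Mathlib

section
/- For the 4×4 threadline coefficient matrix A with constitutive law T(m) = k/m (so that on the reduced variables T = k/ρ · (1+ε²)^{1/2}, and T′(m) = −k/m²), the characteristic polynomial of A has exactly two distinct roots λ₊ = Vˣ + √k/ρ and λ₋ = Vˣ − √k/ρ, each with algebraic multiplicity 2. -/
open Matrix Polynomial

set_option maxHeartbeats 1600000 in
/-- With the constitutive law `T(m) = k/m`, the characteristic polynomial of the 4×4 threadline
coefficient matrix has exactly two distinct roots `Vˣ ± √k/ρ`, each of algebraic multiplicity 2. -/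
theorem threadline_charpoly (k ρ Vx ε : ℝ) (hk : 0 < k) (hρ : 0 < ρ) :
    (letI m : ℝ := ρ / Real.sqrt (1 + ε ^ 2)
     letI T : ℝ := k / m
     letI T' : ℝ := -k / m ^ 2
     (!![Vx, ρ, 0, 0;
         -T' / (ρ * (1 + ε ^ 2)), Vx, 0, (ε / (1 + ε ^ 2) ^ 2) * (T' + T / m);
         0, 0, 2 * Vx, Vx ^ 2 - T / (m * (1 + ε ^ 2));
         0, 0, -1, 0] : Matrix (Fin 4) (Fin 4) ℝ).charpoly)
      = (X - C (Vx + Real.sqrt k / ρ)) ^ 2 * (X - C (Vx - Real.sqrt k / ρ)) ^ 2 ∧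
    Vx + Real.sqrt k / ρ ≠ Vx - Real.sqrt k / ρ := by
  obtain ⟨r, hr0, rfl⟩ : ∃ r : ℝ, 0 < r ∧ k = r ^ 2 :=
    ⟨Real.sqrt k, Real.sqrt_pos.2 hk, (Real.sq_sqrt hk.le).symm⟩
  have hrs : Real.sqrt (r ^ 2) = r := Real.sqrt_sq hr0.le
  rw [hrs]
  have h1 : (0:ℝ) < 1 + ε ^ 2 := by positivity
  have hs : Real.sqrt (1 + ε ^ 2) * Real.sqrt (1 + ε ^ 2) = 1 + ε ^ 2 := Real.mul_self_sqrt h1.le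
  have hs0 : 0 < Real.sqrt (1 + ε ^ 2) := Real.sqrt_pos.2 h1
  have hM : (letI m : ℝ := ρ / Real.sqrt (1 + ε ^ 2)
       letI T : ℝ := r ^ 2 / m
       letI T' : ℝ := -(r ^ 2) / m ^ 2
       (!![Vx, ρ, 0, 0;
         -T' / (ρ * (1 + ε ^ 2)), Vx, 0, (ε / (1 + ε ^ 2) ^ 2) * (T' + T / m);
         0, 0, 2 * Vx, Vx ^ 2 - T / (m * (1 + ε ^ 2));
         0, 0, -1, 0] : Matrix (Fin 4) (Fin 4) ℝ)) =
       !![Vx, ρ, 0, 0; r ^ 2 / ρ ^ 3, Vx, 0, 0; 0, 0, 2 * Vx, Vx ^ 2 - r ^ 2 / ρ ^ 2; 0, 0, -1, 0] := by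
    ext i j
    fin_cases i <;> fin_cases j <;> simp <;> field_simp
    · exact Real.sq_sqrt h1.le
    · right; ring
    · exact Real.sq_sqrt h1.le
  rw [show (-(r ^ 2) : ℝ) = -r ^ 2 by ring] at hM
  constructor
  · rw [hM, Matrix.charpoly]
    have hC : (!![Vx, ρ, 0, 0; r ^ 2 / ρ ^ 3, Vx, 0, 0;
          0, 0, 2 * Vx, Vx ^ 2 - r ^ 2 / ρ ^ 2; 0, 0, -1, 0] :
          Matrix (Fin 4) (Fin 4) ℝ).charmatrix =
        !![X - C Vx, -C ρ, 0, 0; -C (r ^ 2 / ρ ^ 3), X - C Vx, 0, 0;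
           0, 0, X - C (2 * Vx), -C (Vx ^ 2 - r ^ 2 / ρ ^ 2); 0, 0, C 1, X] := by
      apply Matrix.ext
      intro i j
      fin_cases i <;> fin_cases j <;>
        simp (config := { decide := true }) [charmatrix_apply, Matrix.diagonal_apply,
          Matrix.one_apply, Fin.ext_iff, Matrix.vecHead, Matrix.vecTail] <;>
        first | ring | decide
    rw [hC]
    rw [Matrix.det_succ_row_zero]
    simp (config := { decide := true }) [Fin.sum_univ_succ, Matrix.det_succ_row_zero,
      Fin.succAbove]
    apply Polynomial.funext
    intro x
    simp only [eval_mul, eval_add, eval_sub, eval_neg, eval_pow, eval_X, eval_C, eval_one]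
    field_simp
    ring
  · have hq : 0 < r / ρ := div_pos hr0 hρ
    intro h
    have : r / ρ = 0 := by linarith
    linarith
end

section
/- The 2×2 subsystem ρ_t + Vˣρ_x + ρVˣ_x = 0, Vˣ_t + (k/ρ³)ρ_x + VˣVˣ_x = 0 (k > 0, ρ > 0) is strictly hyperbolic with eigenvalues λ± = Vˣ ± √k/ρ, and both characteristic fields are linearly degenerate: (∇_{(ρ,Vˣ)}λ±)·r± = 0, where r± = (ρ, ±√k/ρ)ᵀ are the corresponding right eigenvectors. -/
open Matrix

lemma sqrtk_deriv (k ρ Vx : ℝ) (hρ : 0 < ρ) :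
    HasFDerivAt (fun u : ℝ × ℝ => Real.sqrt k / u.1)
      ((-Real.sqrt k / ρ ^ 2) • ContinuousLinearMap.fst ℝ ℝ ℝ) (ρ, Vx) := by
  have hinv : HasFDerivAt (fun u : ℝ × ℝ => (u.1)⁻¹)
      ((-(ρ ^ 2)⁻¹) • ContinuousLinearMap.fst ℝ ℝ ℝ) (ρ, Vx) := by
    have := (hasFDerivAt_inv hρ.ne').comp (ρ, Vx) (hasFDerivAt_fst (𝕜 := ℝ) (p := (ρ, Vx)))
    refine this.congr_fderiv ?_
    refine ContinuousLinearMap.ext fun v => ?_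
    simp [mul_comm]
  have h2 := hinv.const_smul (Real.sqrt k)
  have heq : (fun u : ℝ × ℝ => Real.sqrt k / u.1)
      = fun y : ℝ × ℝ => Real.sqrt k • (y.1)⁻¹ := by
    funext u; simp [div_eq_mul_inv]
  have hL : (-Real.sqrt k / ρ ^ 2) • ContinuousLinearMap.fst ℝ ℝ ℝ
      = Real.sqrt k • ((-(ρ ^ 2)⁻¹) • ContinuousLinearMap.fst ℝ ℝ ℝ) := by
    rw [smul_smul]; congr 1; field_simp
  rw [heq, hL]
  exact h2

/-- The 2×2 threadline subsystem matrix `[[Vˣ, ρ], [k/ρ³, Vˣ]]` is strictly hyperbolic with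
eigenvalues `λ± = Vˣ ± √k/ρ` and right eigenvectors `r± = (ρ, ±√k/ρ)ᵀ`, and both
characteristic fields are linearly degenerate: `∇λ± · r± = 0`. -/
theorem threadline_subsystem_linearly_degenerate (k ρ Vx : ℝ) (hk : 0 < k) (hρ : 0 < ρ) :
    (!![Vx, ρ; k / ρ ^ 3, Vx] *ᵥ ![ρ, Real.sqrt k / ρ]
        = (Vx + Real.sqrt k / ρ) • ![ρ, Real.sqrt k / ρ]) ∧
    (!![Vx, ρ; k / ρ ^ 3, Vx] *ᵥ ![ρ, -(Real.sqrt k / ρ)]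
        = (Vx - Real.sqrt k / ρ) • ![ρ, -(Real.sqrt k / ρ)]) ∧
    (Vx + Real.sqrt k / ρ ≠ Vx - Real.sqrt k / ρ) ∧
    (fderiv ℝ (fun u : ℝ × ℝ => u.2 + Real.sqrt k / u.1) (ρ, Vx) (ρ, Real.sqrt k / ρ) = 0) ∧
    (fderiv ℝ (fun u : ℝ × ℝ => u.2 - Real.sqrt k / u.1) (ρ, Vx) (ρ, -(Real.sqrt k / ρ)) = 0) := by
  have hρ0 : ρ ≠ 0 := hρ.ne'
  have hsq : Real.sqrt k * Real.sqrt k = k := Real.mul_self_sqrt hk.le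
  have hsqpos : 0 < Real.sqrt k := Real.sqrt_pos.mpr hk
  have hder := sqrtk_deriv k ρ Vx hρ
  refine ⟨?_, ?_, ?_, ?_, ?_⟩
  · funext i
    fin_cases i <;>
      simp [mulVec, dotProduct, Fin.sum_univ_two] <;> field_simp <;> ring_nf <;>
      simp [Real.sq_sqrt hk.le, hsq] <;> ring
  · funext i
    fin_cases i <;>
      simp [mulVec, dotProduct, Fin.sum_univ_two] <;> field_simp <;> ring_nf <;>
      simp [Real.sq_sqrt hk.le, hsq] <;> ring
  · have : Real.sqrt k / ρ > 0 := div_pos hsqpos hρ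
    intro h; linarith [h]
  · have h := ((hasFDerivAt_snd (𝕜 := ℝ) (p := (ρ, Vx))).add hder).fderiv
    erw [h]
    simp
    field_simp
    ring
  · have h := ((hasFDerivAt_snd (𝕜 := ℝ) (p := (ρ, Vx))).sub hder).fderiv
    erw [h]
    simp
    field_simp
    ring
end
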